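/- arXiv:1403.1649 — 2 statements merged into one kernel-verified Lean document; each statement's English description precedes it below -/
import Mathlib

section
/- Let A be a real symmetric positive definite n×n matrix, r ∈ ℝⁿ, and c, d ∈ ℝⁿ linearly independent. Define v = A·c, ρ₁ = ⟨c, v⟩, α₁ = ⟨c, r⟩, r̃ = r − (α₁/ρ₁)·v, w = A·d, γ = ⟨d, v⟩, β = ⟨d, w⟩, α₂ = ⟨d, r̃⟩, ρ₂ = β − γ²/ρ₁, and x = (α₁/ρ₁ − γ·α₂/(ρ₁·ρ₂))·c + (α₂/ρ₂)·d. Then ⟨c, r − A·x⟩ = 0 and ⟨d, r − A·x⟩ = 0; that is, the K-cycle CG update x solves the Galerkin (normal) equations on the two-dimensional correction space span{c, d}. -/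
/-!
Put `u = d - (γ/ρ₁) c`, the component of `d` that is `A`-orthogonal to `c`. By symmetry of `A`,
`u ⬝ A u = ρ₂` and `α₂ = u ⬝ r̃`, so `x = (α₁/ρ₁) c + (α₂/ρ₂) u`: the update consists of two
successive `A`-projections, onto `c` and then onto `u`. Each one removes the component of the
residual along its direction, and the second does not disturb the first because `c ⬝ A u = 0`.
Hence `r - A x` is orthogonal to `c` and `u`, and so to `d ∈ span {c, u}`. Positive definiteness
and independence of `c, d` give `ρ₁ > 0` and `ρ₂ > 0`, so no division is by zero.
-/

open Matrix

section Projection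

variable {K ι : Type*} [Field K] [Fintype ι] {A : Matrix ι ι K}

theorem dotProduct_sub_div_smul_mulVec_self (r p : ι → K) (hp : p ⬝ᵥ A *ᵥ p ≠ 0) :
    p ⬝ᵥ (r - (p ⬝ᵥ r / p ⬝ᵥ A *ᵥ p) • A *ᵥ p) = 0 := by
  rw [dotProduct_sub, dotProduct_smul, smul_eq_mul, div_mul_cancel₀ _ hp, sub_self]

theorem dotProduct_eq_zero_of_sub_smul_dotProduct_eq_zero {c d e : ι → K} {t : K}
    (hc : c ⬝ᵥ e = 0) (hu : (d - t • c) ⬝ᵥ e = 0) : d ⬝ᵥ e = 0 := by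
  rwa [sub_dotProduct, smul_dotProduct, hc, smul_zero, sub_zero] at hu

theorem Matrix.IsSymm.dotProduct_mulVec_comm (hA : A.IsSymm) (x y : ι → K) :
    x ⬝ᵥ A *ᵥ y = y ⬝ᵥ A *ᵥ x := by
  rw [dotProduct_mulVec, ← mulVec_transpose, hA.eq, dotProduct_comm]

theorem Matrix.IsSymm.dotProduct_mulVec_sub_div_smul (hA : A.IsSymm) (c d : ι → K)
    (hc : c ⬝ᵥ A *ᵥ c ≠ 0) :
    c ⬝ᵥ A *ᵥ (d - (d ⬝ᵥ A *ᵥ c / c ⬝ᵥ A *ᵥ c) • c) = 0 := by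
  rw [hA.dotProduct_mulVec_comm d c, mulVec_sub, mulVec_smul]
  exact dotProduct_sub_div_smul_mulVec_self _ c hc

theorem Matrix.IsSymm.dotProduct_mulVec_self_sub_div_smul (hA : A.IsSymm) (c d : ι → K)
    (hc : c ⬝ᵥ A *ᵥ c ≠ 0) :
    (d - (d ⬝ᵥ A *ᵥ c / c ⬝ᵥ A *ᵥ c) • c) ⬝ᵥ A *ᵥ (d - (d ⬝ᵥ A *ᵥ c / c ⬝ᵥ A *ᵥ c) • c) =
      d ⬝ᵥ A *ᵥ d - (d ⬝ᵥ A *ᵥ c) ^ 2 / c ⬝ᵥ A *ᵥ c := by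
  rw [sub_dotProduct, smul_dotProduct, hA.dotProduct_mulVec_sub_div_smul c d hc, smul_zero,
    sub_zero, mulVec_sub, mulVec_smul, dotProduct_sub, dotProduct_smul, smul_eq_mul]
  ring

end Projection

section TrivialStar

variable {K ι : Type*} [Ring K] [PartialOrder K] [StarRing K] [TrivialStar K] {A : Matrix ι ι K}

theorem Matrix.PosDef.isSymm_of_trivialStar (hA : A.PosDef) : A.IsSymm := by
  simpa [IsSymm, conjTranspose_eq_transpose_of_trivial] using hA.isHermitian.eq

theorem Matrix.PosDef.dotProduct_mulVec_pos_of_trivialStar [Fintype ι] (hA : A.PosDef)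
    {x : ι → K} (hx : x ≠ 0) : 0 < x ⬝ᵥ A *ᵥ x := by
  simpa using hA.dotProduct_mulVec_pos hx

end TrivialStar

theorem kcycle_cg_two_dim_galerkin (n : ℕ)
    (A : Matrix (Fin n) (Fin n) ℝ) (hA : A.PosDef)
    (r c d : Fin n → ℝ) (hcd : LinearIndependent ℝ ![c, d])
    (v : Fin n → ℝ) (hv : v = A.mulVec c)
    (ρ₁ α₁ : ℝ) (hρ₁ : ρ₁ = c ⬝ᵥ v) (hα₁ : α₁ = c ⬝ᵥ r)
    (r' : Fin n → ℝ) (hr' : r' = r - (α₁ / ρ₁) • v)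
    (w : Fin n → ℝ) (hw : w = A.mulVec d)
    (γ β α₂ ρ₂ : ℝ)
    (hγ : γ = d ⬝ᵥ v) (hβ : β = d ⬝ᵥ w) (hα₂ : α₂ = d ⬝ᵥ r')
    (hρ₂ : ρ₂ = β - γ ^ 2 / ρ₁)
    (x : Fin n → ℝ)
    (hx : x = (α₁ / ρ₁ - γ * α₂ / (ρ₁ * ρ₂)) • c + (α₂ / ρ₂) • d) :
    c ⬝ᵥ (r - A.mulVec x) = 0 ∧ d ⬝ᵥ (r - A.mulVec x) = 0 := by
  subst hv hw hβ hρ₂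
  have hsymm := hA.isSymm_of_trivialStar
  have hc : c ≠ 0 := hcd.ne_zero 0
  have hcAc : c ⬝ᵥ A *ᵥ c ≠ 0 := (hA.dotProduct_mulVec_pos_of_trivialStar hc).ne'
  set u := d - (γ / ρ₁) • c with hu
  have huAu : u ⬝ᵥ A *ᵥ u ≠ 0 := (hA.dotProduct_mulVec_pos_of_trivialStar <| sub_ne_zero.mpr
    fun h => (LinearIndependent.pair_iff' hc).mp hcd _ h.symm).ne'
  have hcu : c ⬝ᵥ A *ᵥ u = 0 := by
    rw [hu, hγ, hρ₁]; exact hsymm.dotProduct_mulVec_sub_div_smul c d hcAc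
  have hρ₂ : d ⬝ᵥ A *ᵥ d - γ ^ 2 / ρ₁ = u ⬝ᵥ A *ᵥ u := by
    rw [hu, hγ, hρ₁]; exact (hsymm.dotProduct_mulVec_self_sub_div_smul c d hcAc).symm
  have hcr' : c ⬝ᵥ r' = 0 := by
    rw [hr', hα₁, hρ₁]; exact dotProduct_sub_div_smul_mulVec_self r c hcAc
  have hα₂u : α₂ = u ⬝ᵥ r' := by
    rw [hu, sub_dotProduct, smul_dotProduct, hcr', smul_zero, sub_zero, hα₂]
  have hres : r - A *ᵥ x = r' - (u ⬝ᵥ r' / u ⬝ᵥ A *ᵥ u) • A *ᵥ u := by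
    rw [hx, ← hα₂u, hρ₂, hr', hu, mulVec_add, mulVec_smul, mulVec_smul, mulVec_sub, mulVec_smul]
    module
  have hc_res : c ⬝ᵥ (r - A *ᵥ x) = 0 := by
    rw [hres, dotProduct_sub, dotProduct_smul, hcr', hcu, smul_zero, sub_zero]
  have hu_res : u ⬝ᵥ (r - A *ᵥ x) = 0 := by
    rw [hres]; exact dotProduct_sub_div_smul_mulVec_self r' u huAu
  exact ⟨hc_res, dotProduct_eq_zero_of_sub_smul_dotProduct_eq_zero hc_res hu_res⟩
end

section
/- Let A be a real n×n matrix, r ∈ ℝⁿ, and c, d ∈ ℝⁿ vectors such that A·c and A·d are linearly independent. With v = A·c, ρ₁ = ‖v‖², α₁ = ⟨v, r⟩, r̃ = r − (α₁/ρ₁)·v, w = A·d, γ = ⟨w, v⟩, β = ‖w‖², α₂ = ⟨w, r̃⟩, ρ₂ = β − γ²/ρ₁, and x = (α₁/ρ₁ − γ·α₂/(ρ₁·ρ₂))·c + (α₂/ρ₂)·d, the residual of the combined K-cycle update satisfies ‖r − A·x‖₂ ≤ ‖r − A·y‖₂ for every y in the span of c and d; in particular ‖r − A·x‖₂ ≤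 ‖r̃‖₂ ≤ ‖r‖₂. -/
/-!
The update is two steps of Gram–Schmidt in disguise. With `v = A c` and `w = A d`, `r̃` is the
rejection of `r` from `v`, `ρ₂` is the squared length of the rejection `w̃` of `w` from `v`, and
`α₂ = ⟨w̃, r̃⟩`; so `A x = (α₁/ρ₁) v + (α₂/ρ₂) w̃`, and `r - A x` is the rejection of `r̃` from `w̃`.
That residual is orthogonal to `v` and `w`, hence to `A y` for every `y ∈ span {c, d}`, and
Pythagoras makes it the shortest residual over that span.
-/

open Matrix Finset

section

variable {ι K : Type*} [Fintype ι]

theorem sum_sq_eq_dotProduct_self [CommSemiring K] (f : ι → K) : ∑ i, f i ^ 2 = f ⬝ᵥ f := by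
  simp only [dotProduct, sq]

theorem dotProduct_self_nonneg [CommRing K] [LinearOrder K] [IsStrictOrderedRing K]
    (f : ι → K) : 0 ≤ f ⬝ᵥ f :=
  sum_nonneg fun i _ => mul_self_nonneg (f i)

theorem dotProduct_self_le_add_self_of_dotProduct_eq_zero [CommRing K] [LinearOrder K]
    [IsStrictOrderedRing K] {e u : ι → K} (h : u ⬝ᵥ e = 0) :
    e ⬝ᵥ e ≤ (e + u) ⬝ᵥ (e + u) := by
  have expand : (e + u) ⬝ᵥ (e + u) = e ⬝ᵥ e + 2 * (u ⬝ᵥ e) + u ⬝ᵥ u := by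
    simp only [add_dotProduct, dotProduct_add, dotProduct_comm e u]
    ring
  linarith [dotProduct_self_nonneg u]

theorem mulVec_dotProduct_eq_zero_of_mem_span [CommRing K] {m : Type*} [Fintype m]
    {A : Matrix m ι K} {s : Set (ι → K)} {e : m → K} (h : ∀ c ∈ s, (A *ᵥ c) ⬝ᵥ e = 0)
    {z : ι → K} (hz : z ∈ Submodule.span K s) : (A *ᵥ z) ⬝ᵥ e = 0 := by
  induction hz using Submodule.span_induction with
  | mem c hc => exact h c hc
  | zero => simp
  | add _ _ _ _ h₁ h₂ => rw [mulVec_add, add_dotProduct, h₁, h₂, add_zero]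
  | smul a _ _ h => rw [mulVec_smul, smul_dotProduct, h, smul_zero]

theorem sub_mulVec_dotProduct_self_le [CommRing K] [LinearOrder K] [IsStrictOrderedRing K]
    {m : Type*} [Fintype m] {A : Matrix m ι K} {s : Set (ι → K)} {r : m → K} {x y : ι → K}
    (horth : ∀ c ∈ s, (A *ᵥ c) ⬝ᵥ (r - A *ᵥ x) = 0) (hx : x ∈ Submodule.span K s)
    (hy : y ∈ Submodule.span K s) :
    (r - A *ᵥ x) ⬝ᵥ (r - A *ᵥ x) ≤ (r - A *ᵥ y) ⬝ᵥ (r - A *ᵥ y) := by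
  rw [show r - A *ᵥ y = (r - A *ᵥ x) + A *ᵥ (x - y) by rw [mulVec_sub]; abel]
  exact dotProduct_self_le_add_self_of_dotProduct_eq_zero
    (mulVec_dotProduct_eq_zero_of_mem_span horth (sub_mem hx hy))

variable [Field K]

/-- `r` minus its orthogonal projection onto `u`; equal to `r` when `u = 0`, as `0 / 0 = 0`. -/
def rejection (u r : ι → K) : ι → K := r - (u ⬝ᵥ r / (u ⬝ᵥ u)) • u

theorem rejection_dotProduct_of_dotProduct_eq_zero {u s : ι → K} (h : u ⬝ᵥ s = 0)
    (w : ι → K) : rejection u w ⬝ᵥ s = w ⬝ᵥ s := by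
  simp [rejection, sub_dotProduct, smul_dotProduct, h]

theorem dotProduct_rejection_eq_zero_of_dotProduct_eq_zero {v u s : ι → K} (hu : v ⬝ᵥ u = 0)
    (hs : v ⬝ᵥ s = 0) : v ⬝ᵥ rejection u s = 0 := by
  simp [rejection, dotProduct_sub, dotProduct_smul, hu, hs]

variable [LinearOrder K] [IsStrictOrderedRing K]

theorem dotProduct_rejection (u r : ι → K) : u ⬝ᵥ rejection u r = 0 := by
  rcases eq_or_ne (u ⬝ᵥ u) 0 with hu | hu
  · simp [dotProduct_self_eq_zero.mp hu]
  · simp only [rejection, dotProduct_sub, dotProduct_smul, smul_eq_mul]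
    field_simp
    ring

theorem rejection_dotProduct_self (u r : ι → K) :
    rejection u r ⬝ᵥ rejection u r = r ⬝ᵥ r - (u ⬝ᵥ r) ^ 2 / (u ⬝ᵥ u) := by
  rcases eq_or_ne (u ⬝ᵥ u) 0 with hu | hu
  · simp [rejection, dotProduct_self_eq_zero.mp hu]
  · simp only [rejection, dotProduct_sub, sub_dotProduct, dotProduct_smul, smul_dotProduct,
      smul_eq_mul, dotProduct_comm r u]
    field_simp
    ring

theorem rejection_dotProduct_self_le (u r : ι → K) :
    rejection u r ⬝ᵥ rejection u r ≤ r ⬝ᵥ r := by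
  rw [rejection_dotProduct_self]
  linarith [div_nonneg (sq_nonneg (u ⬝ᵥ r)) (dotProduct_self_nonneg u)]

theorem dotProduct_rejection_rejection (v w r : ι → K) :
    v ⬝ᵥ rejection (rejection v w) (rejection v r) = 0 ∧
      w ⬝ᵥ rejection (rejection v w) (rejection v r) = 0 := by
  have hv : v ⬝ᵥ rejection (rejection v w) (rejection v r) = 0 :=
    dotProduct_rejection_eq_zero_of_dotProduct_eq_zero (dotProduct_rejection v w)
      (dotProduct_rejection v r)
  refine ⟨hv, ?_⟩
  rw [← rejection_dotProduct_of_dotProduct_eq_zero hv]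
  exact dotProduct_rejection _ _

end

theorem kcycle_gmres_two_dim_minres_general (n : ℕ)
    (A : Matrix (Fin n) (Fin n) ℝ)
    (r c d : Fin n → ℝ)
    (v : Fin n → ℝ) (hv : v = A.mulVec c)
    (ρ₁ α₁ : ℝ) (hρ₁ : ρ₁ = ∑ i, (v i) ^ 2) (hα₁ : α₁ = v ⬝ᵥ r)
    (r' : Fin n → ℝ) (hr' : r' = r - (α₁ / ρ₁) • v)
    (w : Fin n → ℝ) (hw : w = A.mulVec d)
    (γ β α₂ ρ₂ : ℝ)
    (hγ : γ = w ⬝ᵥ v) (hβ : β = ∑ i, (w i) ^ 2) (hα₂ : α₂ = w ⬝ᵥ r')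
    (hρ₂ : ρ₂ = β - γ ^ 2 / ρ₁)
    (x : Fin n → ℝ)
    (hx : x = (α₁ / ρ₁ - γ * α₂ / (ρ₁ * ρ₂)) • c + (α₂ / ρ₂) • d) :
    (∀ y ∈ Submodule.span ℝ ({c, d} : Set (Fin n → ℝ)),
        Real.sqrt (∑ i, ((r - A.mulVec x) i) ^ 2) ≤
          Real.sqrt (∑ i, ((r - A.mulVec y) i) ^ 2)) ∧
      Real.sqrt (∑ i, ((r - A.mulVec x) i) ^ 2) ≤ Real.sqrt (∑ i, (r' i) ^ 2) ∧
      Real.sqrt (∑ i, (r' i) ^ 2) ≤ Real.sqrt (∑ i, (r i) ^ 2) := by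
  simp only [sum_sq_eq_dotProduct_self] at hρ₁ hβ ⊢
  have hr'_eq : r' = rejection v r := by rw [hr', hα₁, hρ₁]; rfl
  have hρ₂_eq : ρ₂ = rejection v w ⬝ᵥ rejection v w := by
    rw [rejection_dotProduct_self, hρ₂, hβ, hγ, hρ₁, dotProduct_comm w v]
  have hα₂_eq : α₂ = rejection v w ⬝ᵥ r' := by
    rw [hα₂, rejection_dotProduct_of_dotProduct_eq_zero (hr'_eq ▸ dotProduct_rejection v r)]
  set e := rejection (rejection v w) r' with he
  have hres : r - A *ᵥ x = e := by
    rw [he, rejection, ← hα₂_eq, ← hρ₂_eq, hr', rejection, hx, mulVec_add, mulVec_smul,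
      mulVec_smul, ← hv, ← hw, hα₁, hρ₁, dotProduct_comm v w, ← hγ]
    module
  obtain ⟨hve, hwe⟩ : v ⬝ᵥ e = 0 ∧ w ⬝ᵥ e = 0 := by
    rw [he, hr'_eq]
    exact dotProduct_rejection_rejection v w r
  have hmin : ∀ y ∈ Submodule.span ℝ ({c, d} : Set (Fin n → ℝ)),
      e ⬝ᵥ e ≤ (r - A *ᵥ y) ⬝ᵥ (r - A *ᵥ y) := by
    intro y hy
    rw [← hres]
    refine sub_mulVec_dotProduct_self_le ?_ (hx ▸ Submodule.mem_span_pair.mpr ⟨_, _, rfl⟩) hy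
    rintro z (rfl | rfl)
    · rwa [hres, ← hv]
    · rwa [hres, ← hw]
  rw [hres]
  refine ⟨fun y hy => Real.sqrt_le_sqrt (hmin y hy), Real.sqrt_le_sqrt ?_,
    Real.sqrt_le_sqrt (hr'_eq ▸ rejection_dotProduct_self_le v r)⟩
  have hy : (α₁ / ρ₁) • c ∈ Submodule.span ℝ ({c, d} : Set (Fin n → ℝ)) :=
    Submodule.smul_mem _ _ (Submodule.subset_span (by simp))
  simpa [mulVec_smul, ← hv, ← hr'] using hmin _ hy

theorem kcycle_gmres_two_dim_minres (n : ℕ)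
    (A : Matrix (Fin n) (Fin n) ℝ)
    (r c d : Fin n → ℝ) (hcd : LinearIndependent ℝ ![A.mulVec c, A.mulVec d])
    (v : Fin n → ℝ) (hv : v = A.mulVec c)
    (ρ₁ α₁ : ℝ) (hρ₁ : ρ₁ = ∑ i, (v i) ^ 2) (hα₁ : α₁ = v ⬝ᵥ r)
    (r' : Fin n → ℝ) (hr' : r' = r - (α₁ / ρ₁) • v)
    (w : Fin n → ℝ) (hw : w = A.mulVec d)
    (γ β α₂ ρ₂ : ℝ)
    (hγ : γ = w ⬝ᵥ v) (hβ : β = ∑ i, (w i) ^ 2) (hα₂ : α₂ = w ⬝ᵥ r')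
    (hρ₂ : ρ₂ = β - γ ^ 2 / ρ₁)
    (x : Fin n → ℝ)
    (hx : x = (α₁ / ρ₁ - γ * α₂ / (ρ₁ * ρ₂)) • c + (α₂ / ρ₂) • d) :
    (∀ y ∈ Submodule.span ℝ ({c, d} : Set (Fin n → ℝ)),
        Real.sqrt (∑ i, ((r - A.mulVec x) i) ^ 2) ≤
          Real.sqrt (∑ i, ((r - A.mulVec y) i) ^ 2)) ∧
      Real.sqrt (∑ i, ((r - A.mulVec x) i) ^ 2) ≤ Real.sqrt (∑ i, (r' i) ^ 2) ∧
      Real.sqrt (∑ i, (r' i) ^ 2) ≤ Real.sqrt (∑ i, (r i) ^ 2) :=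
  kcycle_gmres_two_dim_minres_general n A r c d v hv ρ₁ α₁ hρ₁ hα₁ r' hr' w hw γ β α₂ ρ₂ hγ hβ hα₂
    hρ₂ x hx
end
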